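/- Let X be a random variable with pdf f that is continuous and strictly positive on an open interval S and zero outside S, with cdf F and finite mean μ. Then f(μ+x) = f(μ-x) for all x ≥ 0 if and only if f(F^{-1}(u)) = f(F^{-1}(1-u)) for all u ∈ (0,1). -/

import Mathlib

open MeasureTheory Real Set

/-- The cdf associated with a pdf `f`. -/
noncomputable def cdfOf (f : ℝ → ℝ) (x : ℝ) : ℝ := ∫ t in Iic x, f t

/-- Quantile function `F⁻¹(u) = inf {x : F x ≥ u}`. -/
noncomputable def qf (F : ℝ → ℝ) (u : ℝ) : ℝ := sInf {x | u ≤ F x}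

/-- pdf of the `i`-th order statistic of an i.i.d. sample of size `n` from pdf `f`, cdf `F`. -/
noncomputable def osPdf (f F : ℝ → ℝ) (i n : ℕ) (x : ℝ) : ℝ :=
  ((Nat.factorial n : ℝ) / ((Nat.factorial (i - 1) : ℝ) * (Nat.factorial (n - i) : ℝ))) *
    F x ^ (i - 1) * (1 - F x) ^ (n - i) * f x

/-- `φ_{2i-1:2n-1}`, the pdf of a Beta(2i-1, 2n-2i+1) random variable. -/
noncomputable def betaPdf (i n : ℕ) (u : ℝ) : ℝ :=
  ((Nat.factorial (2 * n - 1) : ℝ) /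
      ((Nat.factorial (2 * i - 2) : ℝ) * (Nat.factorial (2 * n - 2 * i) : ℝ))) *
    u ^ (2 * i - 2) * (1 - u) ^ (2 * n - 2 * i)

/-- The constant `C_{i,n}`. -/
noncomputable def Cin (i n : ℕ) : ℝ :=
  ((Nat.choose (2 * i - 2) (i - 1) : ℝ) * (Nat.choose (2 * n - 2 * i) (n - i) : ℝ)) /
    (Nat.choose (2 * n - 1) (n - 1) : ℝ)

/-- General weighted extropy of the PRSS data with sample size `n` and rank parameters `a, b`. -/
noncomputable def Jprss (w f F : ℝ → ℝ) (n a b : ℕ) : ℝ :=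
  if Even n then
    -(1 / 2) * (∫ x, w x * osPdf f F a n x ^ 2) ^ (n / 2) *
      (∫ x, w x * osPdf f F b n x ^ 2) ^ (n / 2)
  else
    -(1 / 2) * (∫ x, w x * osPdf f F a n x ^ 2) ^ ((n - 1) / 2) *
      (∫ x, w x * osPdf f F b n x ^ 2) ^ ((n - 1) / 2) *
      (∫ x, w x * osPdf f F ((n + 1) / 2) n x ^ 2)

/-- pdf `ψ_{2i-1:2n}` of the (2i-1)-th order statistic of a standard exponential sample of size 2n. -/
noncomputable def expOsPdf (i n : ℕ) (x : ℝ) : ℝ :=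
  ((Nat.factorial (2 * n) : ℝ) /
      ((Nat.factorial (2 * i - 2) : ℝ) * (Nat.factorial (2 * n - 2 * i + 1) : ℝ))) *
    (1 - Real.exp (-x)) ^ (2 * i - 2) * Real.exp (-(((2 * n - 2 * i + 2 : ℕ) : ℝ) * x))

open Filter Topology

section Aux
variable {f : ℝ → ℝ} {S : Set ℝ} {x y u : ℝ}

lemma fa_side (hSconn : S.OrdConnected) (hx : x ∉ S) :
    (∀ s ∈ S, x < s) ∨ (∀ s ∈ S, s < x) := by
  by_contra h
  push_neg at h
  obtain ⟨⟨a, ha, hax⟩, b, hb, hxb⟩ := h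
  exact hx (hSconn.out ha hb ⟨hax, hxb⟩)

lemma fa_mono (h0 : ∀ x, 0 ≤ f x) (hfint : Integrable f) : Monotone (cdfOf f) := by
  intro a b hab
  exact setIntegral_mono_set hfint.integrableOn (ae_of_all _ h0)
    (HasSubset.Subset.eventuallyLE (Iic_subset_Iic.2 hab))

lemma fa_eq (hfint : Integrable f) (x : ℝ) :
    cdfOf f x = (∫ t in Iic 0, f t) + ∫ t in (0:ℝ)..x, f t := by
  rw [← intervalIntegral.integral_Iic_sub_Iic hfint.integrableOn hfint.integrableOn]
  show cdfOf f x = cdfOf f 0 + (cdfOf f x - cdfOf f 0)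
  ring

lemma fa_cont (hfint : Integrable f) : Continuous (cdfOf f) := by
  have : (cdfOf f) = fun x => (∫ t in Iic 0, f t) + ∫ t in (0:ℝ)..x, f t :=
    funext (fa_eq hfint)
  rw [this]
  exact continuous_const.add (hfint.continuous_primitive 0)

lemma fa_below (hfzero : ∀ x ∉ S, f x = 0) (hx : ∀ s ∈ S, x < s) : cdfOf f x = 0 := by
  have : EqOn f 0 (Iic x) := by
    intro t ht
    by_cases htS : t ∈ S
    · exact absurd (lt_of_lt_of_le (hx t htS) ht) (lt_irrefl x)
    · exact hfzero t htS
  rw [cdfOf, setIntegral_congr_fun measurableSet_Iic this]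
  simp

lemma fa_above (hfzero : ∀ x ∉ S, f x = 0) (hfint : Integrable f) (hfpdf : ∫ x, f x = 1)
    (hx : ∀ s ∈ S, s < x) : cdfOf f x = 1 := by
  have h2 : (∫ t in Ioi x, f t) = 0 := by
    have : EqOn f 0 (Ioi x) := by
      intro t ht
      by_cases htS : t ∈ S
      · exact absurd (lt_trans (hx t htS) ht) (lt_irrefl t)
      · exact hfzero t htS
    rw [setIntegral_congr_fun measurableSet_Ioi this]; simp
  have := intervalIntegral.integral_Iic_add_Ioi (b := x) hfint.integrableOn hfint.integrableOn
  rw [h2, add_zero, hfpdf] at this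
  exact this

lemma fa_mem (hS : IsOpen S) (hSconn : S.OrdConnected) (h0 : ∀ x, 0 ≤ f x)
    (hfc : ContinuousOn f S) (hfpos : ∀ x ∈ S, 0 < f x) (hfzero : ∀ x ∉ S, f x = 0)
    (hfint : Integrable f) (hfpdf : ∫ x, f x = 1) (hx : x ∈ S) :
    cdfOf f x ∈ Ioo (0:ℝ) 1 := by
  obtain ⟨ε, hε, hball⟩ := Metric.isOpen_iff.1 hS x hx
  have hlo : x - ε/2 ∈ S := hball (by
    rw [Metric.mem_ball, Real.dist_eq, show x - ε/2 - x = -(ε/2) by ring, abs_neg,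
      abs_of_pos (by linarith)]; linarith)
  have hhi : x + ε/2 ∈ S := hball (by
    rw [Metric.mem_ball, Real.dist_eq, show x + ε/2 - x = ε/2 by ring,
      abs_of_pos (by linarith)]; linarith)
  have hIcc : ∀ a ∈ S, ∀ b ∈ S, Icc a b ⊆ S := fun a ha b hb => hSconn.out ha hb
  have hkey : ∀ a ∈ S, ∀ b ∈ S, a < b → 0 < ∫ t in a..b, f t := by
    intro a ha b hb hab
    refine intervalIntegral.intervalIntegral_pos_of_pos_on
      hfint.intervalIntegrable (fun t ht => hfpos t ?_) hab
    exact hIcc a ha b hb ⟨ht.1.le, ht.2.le⟩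
  constructor
  · have h1 : 0 < ∫ t in (x - ε/2)..x, f t := hkey _ hlo _ hx (by linarith)
    have h2 : (∫ t in (x - ε/2)..x, f t) ≤ cdfOf f x := by
      rw [intervalIntegral.integral_of_le (by linarith : x - ε/2 ≤ x)]
      exact setIntegral_mono_set hfint.integrableOn (ae_of_all _ h0)
        (HasSubset.Subset.eventuallyLE Ioc_subset_Iic_self)
    linarith
  · have h1 : 0 < ∫ t in x..(x + ε/2), f t := hkey _ hx _ hhi (by linarith)
    have h2 : (∫ t in x..(x + ε/2), f t) ≤ ∫ t in Ioi x, f t := by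
      rw [intervalIntegral.integral_of_le (by linarith : x ≤ x + ε/2)]
      exact setIntegral_mono_set hfint.integrableOn (ae_of_all _ h0)
        (HasSubset.Subset.eventuallyLE Ioc_subset_Ioi_self)
    have h3 := intervalIntegral.integral_Iic_add_Ioi (b := x)
      hfint.integrableOn hfint.integrableOn
    rw [hfpdf] at h3
    have : cdfOf f x + ∫ t in Ioi x, f t = 1 := h3
    linarith

lemma fa_strict (hSconn : S.OrdConnected) (hfpos : ∀ x ∈ S, 0 < f x)
    (hfint : Integrable f) : StrictMonoOn (cdfOf f) S := by
  intro a ha b hb hab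
  have hpos : 0 < ∫ t in a..b, f t := by
    refine intervalIntegral.intervalIntegral_pos_of_pos_on
      hfint.intervalIntegrable (fun t ht => hfpos t ?_) hab
    exact hSconn.out ha hb ⟨ht.1.le, ht.2.le⟩
  have := intervalIntegral.integral_Iic_sub_Iic (a := a) (b := b)
    hfint.integrableOn hfint.integrableOn
  have h2 : cdfOf f b - cdfOf f a = ∫ t in a..b, f t := this
  linarith

lemma fa_of_mem (hSconn : S.OrdConnected) (hfzero : ∀ x ∉ S, f x = 0)
    (hfint : Integrable f) (hfpdf : ∫ x, f x = 1)
    (hmem : cdfOf f x ∈ Ioo (0:ℝ) 1) : x ∈ S := by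
  by_contra hx
  rcases fa_side hSconn hx with h | h
  · rw [fa_below hfzero h] at hmem; exact lt_irrefl 0 hmem.1
  · rw [fa_above hfzero hfint hfpdf h] at hmem; exact lt_irrefl 1 hmem.2

lemma fa_exists_ge (hfint : Integrable f) (hfpdf : ∫ x, f x = 1) (hu : u < 1) :
    ∃ y, u ≤ cdfOf f y := by
  have hU : (⋃ n : ℕ, Iic (n:ℝ)) = univ := by
    ext t; simp only [mem_iUnion, mem_Iic, mem_univ, iff_true]
    obtain ⟨n, hn⟩ := exists_nat_gt t
    exact ⟨n, hn.le⟩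
  have ht := tendsto_setIntegral_of_monotone (μ := volume) (f := f)
    (s := fun n : ℕ => Iic (n:ℝ)) (fun n : ℕ => measurableSet_Iic)
    (fun m n hmn => Iic_subset_Iic.2 (by exact_mod_cast hmn)) (by rw [hU]; exact hfint.integrableOn)
  rw [hU] at ht
  simp only [Measure.restrict_univ, hfpdf] at ht
  have := ht.eventually (eventually_gt_nhds hu)
  obtain ⟨n, hn⟩ := this.exists
  exact ⟨n, hn.le⟩

lemma fa_exists_lt (hfint : Integrable f) (hfpdf : ∫ x, f x = 1) (hu : 0 < u) :
    ∃ y, cdfOf f y < u := by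
  have hU : (⋃ n : ℕ, Ioi (-(n:ℝ))) = univ := by
    ext t; simp only [mem_iUnion, mem_Ioi, mem_univ, iff_true]
    obtain ⟨n, hn⟩ := exists_nat_gt (-t)
    exact ⟨n, by linarith⟩
  have ht := tendsto_setIntegral_of_monotone (μ := volume) (f := f)
    (s := fun n : ℕ => Ioi (-(n:ℝ))) (fun n : ℕ => measurableSet_Ioi)
    (fun m n hmn => Ioi_subset_Ioi (neg_le_neg (by exact_mod_cast hmn)))
    (by rw [hU]; exact hfint.integrableOn)
  rw [hU] at ht
  simp only [Measure.restrict_univ, hfpdf] at ht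
  have := ht.eventually (eventually_gt_nhds (by linarith : (1:ℝ) - u < 1))
  obtain ⟨n, hn⟩ := this.exists
  refine ⟨-(n:ℝ) , ?_⟩
  have h3 := intervalIntegral.integral_Iic_add_Ioi (b := -(n:ℝ))
    hfint.integrableOn hfint.integrableOn
  rw [hfpdf] at h3
  have : cdfOf f (-(n:ℝ)) + ∫ t in Ioi (-(n:ℝ)), f t = 1 := h3
  linarith

lemma fa_bddBelow (h0 : ∀ x, 0 ≤ f x) (hfint : Integrable f) (hfpdf : ∫ x, f x = 1)
    (hu : 0 < u) : BddBelow {x | u ≤ cdfOf f x} := by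
  obtain ⟨y, hy⟩ := fa_exists_lt hfint hfpdf hu
  refine ⟨y, fun x hx => ?_⟩
  by_contra h
  push_neg at h
  exact absurd (lt_of_le_of_lt ((mem_setOf.1 hx).trans (fa_mono h0 hfint h.le)) hy) (lt_irrefl u)

lemma fa_ne (hfint : Integrable f) (hfpdf : ∫ x, f x = 1) (hu : u < 1) :
    {x | u ≤ cdfOf f x}.Nonempty := by
  obtain ⟨y, hy⟩ := fa_exists_ge hfint hfpdf hu
  exact ⟨y, hy⟩

lemma fa_FQ (h0 : ∀ x, 0 ≤ f x) (hfint : Integrable f) (hfpdf : ∫ x, f x = 1)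
    (hu : u ∈ Ioo (0:ℝ) 1) : cdfOf f (qf (cdfOf f) u) = u := by
  have hbdd := fa_bddBelow h0 hfint hfpdf hu.1
  have hne := fa_ne hfint hfpdf hu.2
  have hcl : IsClosed {x | u ≤ cdfOf f x} := isClosed_le continuous_const (fa_cont hfint)
  have hmem : qf (cdfOf f) u ∈ {x | u ≤ cdfOf f x} := hcl.csInf_mem hne hbdd
  refine le_antisymm ?_ hmem
  by_contra h
  push_neg at h
  have hev : ∀ᶠ x in 𝓝 (qf (cdfOf f) u), u < cdfOf f x :=
    ((fa_cont hfint).continuousAt).eventually (eventually_gt_nhds h)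
  obtain ⟨δ, hδ, hball⟩ := Metric.eventually_nhds_iff.1 hev
  have hmem2 : qf (cdfOf f) u - δ/2 ∈ {x | u ≤ cdfOf f x} := by
    refine (hball ?_).le
    rw [Real.dist_eq, show qf (cdfOf f) u - δ/2 - qf (cdfOf f) u = -(δ/2) by ring, abs_neg,
      abs_of_pos (by linarith)]
    linarith
  have := csInf_le hbdd hmem2
  simp only [qf] at this ⊢
  linarith

lemma fa_QS (hSconn : S.OrdConnected) (h0 : ∀ x, 0 ≤ f x) (hfzero : ∀ x ∉ S, f x = 0)
    (hfint : Integrable f) (hfpdf : ∫ x, f x = 1) (hu : u ∈ Ioo (0:ℝ) 1) :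
    qf (cdfOf f) u ∈ S :=
  fa_of_mem hSconn hfzero hfint hfpdf (by rw [fa_FQ h0 hfint hfpdf hu]; exact hu)

lemma fa_QF (hS : IsOpen S) (hSconn : S.OrdConnected) (h0 : ∀ x, 0 ≤ f x)
    (hfc : ContinuousOn f S) (hfpos : ∀ x ∈ S, 0 < f x) (hfzero : ∀ x ∉ S, f x = 0)
    (hfint : Integrable f) (hfpdf : ∫ x, f x = 1) (hx : x ∈ S) :
    qf (cdfOf f) (cdfOf f x) = x := by
  have hu : cdfOf f x ∈ Ioo (0:ℝ) 1 :=
    fa_mem hS hSconn h0 hfc hfpos hfzero hfint hfpdf hx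
  have h1 : qf (cdfOf f) (cdfOf f x) ≤ x :=
    csInf_le (fa_bddBelow h0 hfint hfpdf hu.1) (by exact le_refl (cdfOf f x))
  have h2 : qf (cdfOf f) (cdfOf f x) ∈ S :=
    fa_QS hSconn h0 hfzero hfint hfpdf hu
  exact (fa_strict hSconn hfpos hfint).injOn h2 hx (fa_FQ h0 hfint hfpdf hu)

lemma fa_le_Q {q' v : ℝ} (h0 : ∀ x, 0 ≤ f x) (hfint : Integrable f) (hfpdf : ∫ x, f x = 1)
    (hv1 : v < 1) (hlt : cdfOf f q' < v) : q' ≤ qf (cdfOf f) v := by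
  refine le_csInf (fa_ne hfint hfpdf hv1) (fun x hx => ?_)
  by_contra h
  push_neg at h
  exact absurd (lt_of_le_of_lt ((mem_setOf.1 hx).trans (fa_mono h0 hfint h.le)) hlt)
    (lt_irrefl v)

lemma fa_Qcont (hS : IsOpen S) (hSconn : S.OrdConnected) (h0 : ∀ x, 0 ≤ f x)
    (hfc : ContinuousOn f S) (hfpos : ∀ x ∈ S, 0 < f x) (hfzero : ∀ x ∉ S, f x = 0)
    (hfint : Integrable f) (hfpdf : ∫ x, f x = 1) (hu : u ∈ Ioo (0:ℝ) 1) :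
    ContinuousAt (qf (cdfOf f)) u := by
  set q := qf (cdfOf f) u with hq
  have hqS : q ∈ S := fa_QS hSconn h0 hfzero hfint hfpdf hu
  have hFq : cdfOf f q = u := fa_FQ h0 hfint hfpdf hu
  obtain ⟨ε, hε, hball⟩ := Metric.isOpen_iff.1 hS q hqS
  have hballS : ∀ z, |z - q| < ε → z ∈ S := by
    intro z hz
    exact hball (by rwa [Metric.mem_ball, Real.dist_eq])
  rw [ContinuousAt]
  refine tendsto_order.2 ⟨?_, ?_⟩
  · intro b hb
    set q' := (max b (q - ε/2) + q)/2 with hq'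
    have hmaxlt : max b (q - ε/2) < q := max_lt hb (by linarith)
    have hq'lt : q' < q := by
      rw [hq']; linarith
    have hq'gt : max b (q - ε/2) < q' := by
      rw [hq']; linarith
    have hq'S : q' ∈ S := by
      refine hballS q' ?_
      rw [abs_of_nonpos (by linarith)]
      have : q - ε/2 < q' := lt_of_le_of_lt (le_max_right _ _) hq'gt
      linarith
    have hFlt : cdfOf f q' < u := by
      rw [← hFq]
      exact fa_strict hSconn hfpos hfint hq'S hqS hq'lt
    have hmemnhds : Ioo (cdfOf f q') 1 ∈ 𝓝 u := Ioo_mem_nhds hFlt hu.2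
    filter_upwards [hmemnhds] with v hv
    exact lt_of_le_of_lt (le_max_left _ _)
      (lt_of_lt_of_le hq'gt (fa_le_Q h0 hfint hfpdf hv.2 hv.1))
  · intro b hb
    set q'' := (min b (q + ε/2) + q)/2 with hq''
    have hminlt : q < min b (q + ε/2) := lt_min hb (by linarith)
    have hq''gt : q < q'' := by rw [hq'']; linarith
    have hq''lt : q'' < min b (q + ε/2) := by rw [hq'']; linarith
    have hq''S : q'' ∈ S := by
      refine hballS q'' ?_
      rw [abs_of_nonneg (by linarith)]
      have : q'' < q + ε/2 := lt_of_lt_of_le hq''lt (min_le_right _ _)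
      linarith
    have hFgt : u < cdfOf f q'' := by
      rw [← hFq]
      exact fa_strict hSconn hfpos hfint hqS hq''S hq''gt
    have hmemnhds : Ioo (0:ℝ) (cdfOf f q'') ∈ 𝓝 u := Ioo_mem_nhds hu.1 hFgt
    filter_upwards [hmemnhds] with v hv
    have : qf (cdfOf f) v ≤ q'' :=
      csInf_le (fa_bddBelow h0 hfint hfpdf hv.1) (le_of_lt hv.2)
    exact lt_of_le_of_lt this (lt_of_lt_of_le hq''lt (min_le_left _ _))

lemma fa_Fderiv (hS : IsOpen S) (hfc : ContinuousOn f S) (hfint : Integrable f)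
    (hx : x ∈ S) : HasDerivAt (cdfOf f) (f x) x := by
  have hd := intervalIntegral.integral_hasDerivAt_right (a := 0) (b := x)
    hfint.intervalIntegrable
    (ContinuousOn.stronglyMeasurableAtFilter hS hfc x hx)
    (hfc.continuousAt (hS.mem_nhds hx))
  have heq : cdfOf f = fun y => (∫ t in Iic 0, f t) + ∫ t in (0:ℝ)..y, f t :=
    funext (fa_eq hfint)
  rw [heq]
  exact hd.const_add _

lemma fa_Qderiv (hS : IsOpen S) (hSconn : S.OrdConnected) (h0 : ∀ x, 0 ≤ f x)
    (hfc : ContinuousOn f S) (hfpos : ∀ x ∈ S, 0 < f x) (hfzero : ∀ x ∉ S, f x = 0)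
    (hfint : Integrable f) (hfpdf : ∫ x, f x = 1) (hu : u ∈ Ioo (0:ℝ) 1) :
    HasDerivAt (qf (cdfOf f)) (f (qf (cdfOf f) u))⁻¹ u := by
  have hqS : qf (cdfOf f) u ∈ S := fa_QS hSconn h0 hfzero hfint hfpdf hu
  refine HasDerivAt.of_local_left_inverse
    (fa_Qcont hS hSconn h0 hfc hfpos hfzero hfint hfpdf hu)
    (fa_Fderiv hS hfc hfint hqS) (ne_of_gt (hfpos _ hqS)) ?_
  filter_upwards [Ioo_mem_nhds hu.1 hu.2] with v hv
  exact fa_FQ h0 hfint hfpdf hv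

lemma fa_F_reflect (hfint : Integrable f) (hfpdf : ∫ x, f x = 1) {c : ℝ}
    (hsymm : ∀ y, f (c - y) = f y) (x : ℝ) :
    cdfOf f (c - x) = 1 - cdfOf f x := by
  have hpt : ∀ t, ((Iic (c - x)).indicator f) (c - t) = (Ici x).indicator f t := by
    intro t
    by_cases h : x ≤ t
    · rw [indicator_of_mem (show (c - t) ∈ Iic (c - x) from by
        simp only [mem_Iic]; linarith) f, indicator_of_mem (mem_Ici.2 h) f]
      exact hsymm t
    · push_neg at h
      rw [indicator_of_notMem (show (c - t) ∉ Iic (c - x) from by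
        simp only [mem_Iic, not_le]; linarith) f,
        indicator_of_notMem (by simpa only [mem_Ici, not_le] using h) f]
  have h1 : cdfOf f (c - x) = ∫ t, ((Iic (c - x)).indicator f) t :=
    (integral_indicator measurableSet_Iic).symm
  have h2 : (∫ t, ((Iic (c - x)).indicator f) (c - t)) = ∫ t, ((Iic (c - x)).indicator f) t :=
    integral_sub_left_eq_self _ volume c
  have h3 : (∫ t, ((Iic (c - x)).indicator f) (c - t)) = ∫ t in Ici x, f t := by
    simp_rw [hpt]; exact integral_indicator measurableSet_Ici
  have h4 : (∫ t in Ici x, f t) = ∫ t in Ioi x, f t := integral_Ici_eq_integral_Ioi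
  have h5 := intervalIntegral.integral_Iic_add_Ioi (b := x)
    hfint.integrableOn hfint.integrableOn
  rw [hfpdf] at h5
  have h6 : cdfOf f x + ∫ t in Ioi x, f t = 1 := h5
  rw [h1, ← h2, h3, h4]
  linarith

end Aux

/-- Fashandi–Ahmadi lemma: a pdf is symmetric about its mean `μ` iff the
density-quantile function satisfies `f(F⁻¹(u)) = f(F⁻¹(1-u))`. -/
theorem symm_about_mean_iff_density_quantile_symm
    (f : ℝ → ℝ) (S : Set ℝ) (μ : ℝ)
    (hS : IsOpen S) (hSconn : S.OrdConnected)
    (hfc : ContinuousOn f S) (hfpos : ∀ x ∈ S, 0 < f x) (hfzero : ∀ x ∉ S, f x = 0)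
    (hfint : Integrable f) (hfpdf : ∫ x, f x = 1)
    (hmean_int : Integrable (fun x => x * f x)) (hμ : μ = ∫ x, x * f x) :
    (∀ x ≥ (0:ℝ), f (μ + x) = f (μ - x)) ↔
      (∀ u ∈ Ioo (0:ℝ) 1, f (qf (cdfOf f) u) = f (qf (cdfOf f) (1 - u))) := by
  have h0 : ∀ x, 0 ≤ f x := by
    intro x
    by_cases hx : x ∈ S
    · exact (hfpos x hx).le
    · exact (hfzero x hx).ge
  constructor
  · intro hsym u hu
    have hsymm : ∀ y, f (2*μ - y) = f y := by
      intro y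
      rcases le_or_gt μ y with h | h
      · have h2 := hsym (y - μ) (by linarith)
        rw [show μ + (y - μ) = y by ring, show μ - (y - μ) = 2*μ - y by ring] at h2
        exact h2.symm
      · have h2 := hsym (μ - y) (by linarith)
        rw [show μ + (μ - y) = 2*μ - y by ring, show μ - (μ - y) = y by ring] at h2
        exact h2
    have hSsym : ∀ y, y ∈ S → 2*μ - y ∈ S := by
      intro y hy
      by_contra h
      have h2 := hfzero _ h
      rw [hsymm y] at h2
      exact absurd (hfpos y hy) (by rw [h2]; exact lt_irrefl 0)
    set x := qf (cdfOf f) u with hx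
    have hxS : x ∈ S := fa_QS hSconn h0 hfzero hfint hfpdf hu
    have hFx : cdfOf f x = u := fa_FQ h0 hfint hfpdf hu
    have hrefl : cdfOf f (2*μ - x) = 1 - u := by
      rw [show (2*μ - x) = 2*μ - x by ring, fa_F_reflect hfint hfpdf hsymm x, hFx]
    have h2S : 2*μ - x ∈ S := hSsym x hxS
    have hQ1u : qf (cdfOf f) (1 - u) = 2*μ - x := by
      rw [← hrefl]
      exact fa_QF hS hSconn h0 hfc hfpos hfzero hfint hfpdf h2S
    rw [hQ1u]
    exact (hsymm x).symm
  · intro hq x hx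
    have hderiv : ∀ v ∈ Ioo (0:ℝ) 1,
        HasDerivAt (fun w => qf (cdfOf f) w + qf (cdfOf f) (1 - w)) 0 v := by
      intro v hv
      have hv' : 1 - v ∈ Ioo (0:ℝ) 1 := ⟨by linarith [hv.2], by linarith [hv.1]⟩
      have h1 := fa_Qderiv hS hSconn h0 hfc hfpos hfzero hfint hfpdf hv
      have h2 := fa_Qderiv hS hSconn h0 hfc hfpos hfzero hfint hfpdf hv'
      have hlin : HasDerivAt (fun w : ℝ => 1 - w) (-1) v := (hasDerivAt_id v).const_sub 1
      have h3 : HasDerivAt (fun w => qf (cdfOf f) (1 - w))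
          ((f (qf (cdfOf f) (1 - v)))⁻¹ * (-1)) v := h2.comp v hlin
      have h4 := h1.add h3
      have h5 : (f (qf (cdfOf f) v))⁻¹ + (f (qf (cdfOf f) (1 - v)))⁻¹ * -1 = 0 := by
        rw [hq v hv]
        ring
      rw [h5] at h4
      exact h4
    have hconst : ∀ v ∈ Ioo (0:ℝ) 1,
        qf (cdfOf f) v + qf (cdfOf f) (1 - v) =
          qf (cdfOf f) (1/2) + qf (cdfOf f) (1 - 1/2) := by
      intro v hv
      refine (convex_Ioo (0:ℝ) 1).is_const_of_fderivWithin_eq_zero (𝕜 := ℝ)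
        (fun z hz => ((hderiv z hz).differentiableAt).differentiableWithinAt)
        (fun z hz => ?_) hv (by norm_num)
      rw [fderivWithin_of_isOpen isOpen_Ioo hz, (hderiv z hz).hasFDerivAt.fderiv]
      ext w
      simp
    set c := qf (cdfOf f) (1/2) + qf (cdfOf f) (1 - 1/2) with hcdef
    have hsymm : ∀ y, f (c - y) = f y := by
      intro y
      by_cases hy : y ∈ S
      · have hu : cdfOf f y ∈ Ioo (0:ℝ) 1 :=
          fa_mem hS hSconn h0 hfc hfpos hfzero hfint hfpdf hy
        have hQy : qf (cdfOf f) (cdfOf f y) = y :=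
          fa_QF hS hSconn h0 hfc hfpos hfzero hfint hfpdf hy
        have hsum := hconst _ hu
        rw [hQy] at hsum
        have hcy : qf (cdfOf f) (1 - cdfOf f y) = c - y := by linarith
        have hq2 := hq _ hu
        rw [hQy, hcy] at hq2
        exact hq2.symm
      · have hcy : c - y ∉ S := by
          intro hcyS
          have hv : cdfOf f (c - y) ∈ Ioo (0:ℝ) 1 :=
            fa_mem hS hSconn h0 hfc hfpos hfzero hfint hfpdf hcyS
          have hQcy : qf (cdfOf f) (cdfOf f (c - y)) = c - y :=
            fa_QF hS hSconn h0 hfc hfpos hfzero hfint hfpdf hcyS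
          have hsum := hconst _ hv
          rw [hQcy] at hsum
          have hQ1 : qf (cdfOf f) (1 - cdfOf f (c - y)) = y := by linarith
          have hv' : 1 - cdfOf f (c - y) ∈ Ioo (0:ℝ) 1 :=
            ⟨by linarith [hv.2], by linarith [hv.1]⟩
          exact hy (hQ1 ▸ fa_QS hSconn h0 hfzero hfint hfpdf hv')
        rw [hfzero _ hcy, hfzero _ hy]
    have hμc : μ = c - μ := by
      have h1 : (∫ t, (c - t) * f (c - t)) = ∫ t, t * f t :=
        integral_sub_left_eq_self (fun t => t * f t) volume c
      have h2 : (∫ t, (c - t) * f (c - t)) = ∫ t, (c * f t - t * f t) := by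
        congr 1
        funext t
        rw [hsymm t]
        ring
      have h3 : (∫ t, (c * f t - t * f t)) = c * (∫ t, f t) - ∫ t, t * f t := by
        rw [integral_sub (hfint.const_mul c) hmean_int, integral_const_mul]
      rw [h2, h3, hfpdf] at h1
      rw [hμ]
      linarith
    have hc2 : c = 2*μ := by linarith
    have h5 := hsymm (μ + x)
    rw [hc2, show 2*μ - (μ + x) = μ - x by ring] at h5
    exact h5.symm
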